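/- arXiv:1910.11613 — 2 statements merged into one kernel-verified Lean document; each statement's English description precedes it below -/
import Mathlib

section
/- Let α > 0 and Φ := I_{Nn} + 𝐖. For any 𝐱^k, 𝐱^{k+1} ∈ ℝ^{Nn}, the inclusion 0 ∈ Φ(𝐱^{k+1} − 𝐱^k) + F_a(𝐱^{k+1}) + N_𝛀(𝐱^{k+1}) holds if and only if, for every agent i ∈ {1,…,N}: (a) 𝐱^{k+1}_{i,−i} = (1/2)·(𝐱^k_{i,−i} + Σ_{j=1}^N w_{ij} 𝐱^k_{j,−i}), and (b) 𝐱^{k+1}_{i,i} is the unique minimizer over y ∈ Ω_i of J_i(y, 𝐱^{k+1}_{i,−i}) + (1/(2α))·‖y − 𝐱^k_{i,i}‖² + (1/(2α))·‖y − Σ_{j=1}^N w_{ij} 𝐱^k_{j,i}‖². (That is, Algorithm 1 is exactly the preconditioned proximal-point iteration 𝐱^{k+1} ∈ J_{Φ^{-1}A}(𝐱^k).) -/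
/-!
The residual `u := Φ(𝐱' − 𝐱) + F_a(𝐱')` equals `α Rᵀ𝐅(𝐱') + 2𝐱' − (𝐱 + 𝐖𝐱)`: the `𝐖𝐱'` terms
cancel. The set `𝛀` is a product, constraining only the diagonal blocks, so its normal cone is
the product of the blockwise ones. Hence `0 ∈ u + N_𝛀(𝐱')` splits into `u_{ij} = 0` for `j ≠ i`,
which is (a), and `−u_{ii} ∈ N_{Ω_i}(𝐱'_{ii})`. The latter is the first-order optimality
condition for the proximal best-response objective of (b), whose gradient at `𝐱'_{ii}` is
`u_{ii} / α`; as that objective is convex plus a strongly convex quadratic, the condition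
characterises its unique minimiser.
-/

open scoped InnerProductSpace

/-- The strategy-profile space `ℝ^n = ℝ^{n_1} × ⋯ × ℝ^{n_N}`, with the Euclidean (ℓ²)
structure. Block `i` is agent `i`'s strategy space `ℝ^{n_i}`. -/
abbrev Prof (N : ℕ) (d : Fin N → ℕ) : Type :=
  PiLp 2 (fun i : Fin N => EuclideanSpace ℝ (Fin (d i)))

/-- The stacked space `ℝ^{Nn}` of all agents' estimates; block `i` is agent `i`'s estimate
`𝐱_i ∈ ℝ^n` of the full strategy profile. -/
abbrev Est (N : ℕ) (d : Fin N → ℕ) : Type :=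
  PiLp 2 (fun _ : Fin N => Prof N d)

/-- The pseudo-gradient `F(x) := col(∇_{x_i} J_i(x_i, x_{−i}))_i`, built from the partial
gradients `G i`. -/
noncomputable def pseudoGrad {N : ℕ} {d : Fin N → ℕ}
    (G : ∀ i : Fin N, Prof N d → EuclideanSpace ℝ (Fin (d i)))
    (x : Prof N d) : Prof N d :=
  WithLp.toLp 2 (fun i => G i x)

/-- The extended pseudo-gradient `𝐅(𝐱) := col(∇_{x_i} J_i(𝐱_{i,i}, 𝐱_{i,−i}))_i`. -/
noncomputable def extPseudoGrad {N : ℕ} {d : Fin N → ℕ}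
    (G : ∀ i : Fin N, Prof N d → EuclideanSpace ℝ (Fin (d i)))
    (bx : Est N d) : Prof N d :=
  WithLp.toLp 2 (fun i => G i (bx i))

/-- `Rᵀ` places block `i` of `v ∈ ℝ^n` in the `(i,i)`-block position of `ℝ^{Nn}`,
with zeros elsewhere. -/
noncomputable def RT {N : ℕ} {d : Fin N → ℕ} (v : Prof N d) : Est N d :=
  WithLp.toLp 2 (fun i => WithLp.toLp 2 (Function.update (0 : Prof N d) i (v i)))

/-- `𝐖 = W ⊗ I_n` acting blockwise: `(𝐖𝐱)_i = Σ_j w_{ij} 𝐱_j`. -/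
noncomputable def Wact {N : ℕ} {d : Fin N → ℕ} (W : Matrix (Fin N) (Fin N) ℝ) (bx : Est N d) : Est N d :=
  WithLp.toLp 2 (fun i => ∑ j, W i j • bx j)

/-- `F_a(𝐱) := α Rᵀ𝐅(𝐱) + (I_{Nn} − 𝐖)𝐱`. -/
noncomputable def Fa {N : ℕ} {d : Fin N → ℕ} (α : ℝ)
    (G : ∀ i : Fin N, Prof N d → EuclideanSpace ℝ (Fin (d i)))
    (W : Matrix (Fin N) (Fin N) ℝ) (bx : Est N d) : Est N d :=
  α • RT (extPseudoGrad G bx) + (bx - Wact W bx)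

/-- `𝛀 := {𝐱 ∈ ℝ^{Nn} : 𝐱_{i,i} ∈ Ω_i for all i}`. -/
def bigOmega {N : ℕ} {d : Fin N → ℕ}
    (Ω : ∀ i : Fin N, Set (EuclideanSpace ℝ (Fin (d i)))) : Set (Est N d) :=
  {bx | ∀ i, bx i i ∈ Ω i}

/-- Normal cone operator of a closed convex set `S` at `x`
(empty if `x ∉ S`). -/
def normalCone {E : Type*} [NormedAddCommGroup E] [InnerProductSpace ℝ E]
    (S : Set E) (x : E) : Set E :=
  {v | x ∈ S ∧ ∀ z ∈ S, ⟪v, z - x⟫_ℝ ≤ 0}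

/-- The consensus subspace `E_n := {𝟏_N ⊗ y : y ∈ ℝ^n} ⊆ ℝ^{Nn}`. -/
def consensus (N : ℕ) (d : Fin N → ℕ) : Set (Est N d) :=
  {bx | ∃ y : Prof N d, ∀ i, bx i = y}

/-- The preconditioning matrix `Φ := I_{Nn} + 𝐖`, as an operator on `ℝ^{Nn}`. -/
noncomputable def PhiOp {N : ℕ} {d : Fin N → ℕ} (W : Matrix (Fin N) (Fin N) ℝ)
    (bx : Est N d) : Est N d :=
  bx + Wact W bx


section
variable {ι : Type*} [Fintype ι] {F : ι → Type*} [∀ i, NormedAddCommGroup (F i)]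
  [∀ i, InnerProductSpace ℝ (F i)]

theorem mem_normalCone_piLp_iff (S : ∀ i, Set (F i)) (x v : PiLp 2 F) :
    v ∈ normalCone {z : PiLp 2 F | ∀ i, z i ∈ S i} x ↔ ∀ i, v i ∈ normalCone (S i) (x i) := by
  classical
  refine ⟨fun ⟨hx, hv⟩ i => ⟨hx i, fun y hy => ?_⟩, fun h => ⟨fun i => (h i).1, fun z hz => ?_⟩⟩
  · have hz : ∀ j, (WithLp.toLp 2 (Function.update x.ofLp i y) : PiLp 2 F) j ∈ S j := by
      intro j
      rcases eq_or_ne j i with rfl | hj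
      · simpa using hy
      · simpa [Function.update_of_ne hj] using hx j
    have := hv _ hz
    rw [PiLp.inner_apply, Finset.sum_eq_single i (fun j _ hj => by simp [Function.update_of_ne hj])
      (by simp)] at this
    simpa using this
  · rw [PiLp.inner_apply]
    exact Finset.sum_nonpos fun i _ => (h i).2 (z i) (hz i)

theorem mem_normalCone_univ_iff {E : Type*} [NormedAddCommGroup E] [InnerProductSpace ℝ E]
    (x v : E) : v ∈ normalCone Set.univ x ↔ v = 0 := by
  refine ⟨fun ⟨_, hv⟩ => ?_, fun hv => ⟨Set.mem_univ x, fun z _ => by simp [hv]⟩⟩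
  have := hv (x + v) (Set.mem_univ _)
  rw [add_sub_cancel_left, real_inner_self_eq_norm_sq] at this
  exact norm_eq_zero.mp (pow_eq_zero_iff two_ne_zero |>.mp (le_antisymm this (by positivity)))

theorem mem_normalCone_setOf_apply_mem_iff [DecidableEq ι] (i : ι) (T : Set (F i))
    (x v : PiLp 2 F) :
    v ∈ normalCone {z : PiLp 2 F | z i ∈ T} x ↔
      (∀ j, j ≠ i → v j = 0) ∧ v i ∈ normalCone T (x i) := by
  have hset : {z : PiLp 2 F | z i ∈ T} =
      {z : PiLp 2 F | ∀ j, z j ∈ Function.update (fun j => Set.univ) i T j} := by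
    ext z
    simp only [Set.mem_ofPred_eq,
      Function.forall_update_iff (fun j => Set.univ) fun j S => z j ∈ S, Set.mem_univ]
    simp
  rw [hset, mem_normalCone_piLp_iff,
    Function.forall_update_iff (fun j => Set.univ) fun j S => v j ∈ normalCone S (x j)]
  simp only [mem_normalCone_univ_iff, and_comm]

end

section
variable {E : Type*} [NormedAddCommGroup E] [InnerProductSpace ℝ E] [CompleteSpace E]

theorem ConvexOn.inner_gradient_le_sub {f : E → ℝ} {g x : E} (hf : ConvexOn ℝ Set.univ f)
    (hg : HasGradientAt f g x) (y : E) : ⟪g, y - x⟫_ℝ ≤ f y - f x := by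
  let ℓ : ℝ →ᵃ[ℝ] E := AffineMap.lineMap x y
  have hline : HasDerivAt (f ∘ ℓ) ⟪g, y - x⟫_ℝ 0 := by
    have hf' : HasFDerivAt f (InnerProductSpace.toDual ℝ E g) (ℓ 0) := by
      simpa [ℓ] using hasGradientAt_iff_hasFDerivAt.mp hg
    simpa using hf'.comp_hasDerivAt (0 : ℝ) AffineMap.hasDerivAt_lineMap
  simpa [slope_def_field, ℓ] using
    (hf.comp_affineMap ℓ).le_slope_of_hasDerivAt (Set.mem_univ 0) (Set.mem_univ 1) zero_lt_one hline

theorem IsMinOn.inner_gradient_nonneg {f : E → ℝ} {g x y : E} {S : Set E}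
    (hmin : IsMinOn f S x) (hS : Convex ℝ S) (hx : x ∈ S) (hy : y ∈ S)
    (hg : HasGradientAt f g x) : 0 ≤ ⟪g, y - x⟫_ℝ := by
  simpa using hmin.localize.hasFDerivWithinAt_nonneg
    (hasGradientAt_iff_hasFDerivAt.mp hg).hasFDerivWithinAt
    (sub_mem_posTangentConeAt_of_segment_subset (hS.segment_subset hx hy))

noncomputable def proxObjective (f : E → ℝ) (α : ℝ) (a s y : E) : ℝ :=
  f y + (1 / (2 * α)) * ‖y - a‖ ^ 2 + (1 / (2 * α)) * ‖y - s‖ ^ 2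

variable {f : E → ℝ} {g x : E} {α : ℝ} {a s : E}

theorem HasGradientAt.proxObjective (hf : HasGradientAt f g x) (α : ℝ) (a s : E) :
    HasGradientAt (proxObjective f α a s) (g + α⁻¹ • ((2 : ℝ) • x - (a + s))) x := by
  have hsq (b : E) : HasFDerivAt (fun y => ‖y - b‖ ^ 2) (2 • innerSL ℝ (x - b)) x := by
    simpa using ((hasFDerivAt_id x).sub_const b).norm_sq
  rw [hasGradientAt_iff_hasFDerivAt] at hf ⊢
  refine ((hf.add ((hsq a).const_mul (1 / (2 * α)))).add
    ((hsq s).const_mul (1 / (2 * α)))).congr_fderiv ?_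
  ext v
  simp only [one_div, mul_inv_rev, map_sub, map_add, map_smul, add_apply,
    smul_apply, sub_apply, innerSL_apply_apply,
    InnerProductSpace.toDual_apply_apply, nsmul_eq_mul, Nat.cast_ofNat, smul_eq_mul]
  ring

theorem ConvexOn.proxObjective_sub_ge (hf : ConvexOn ℝ Set.univ f) (hg : HasGradientAt f g x)
    (y : E) :
    ⟪g + α⁻¹ • ((2 : ℝ) • x - (a + s)), y - x⟫_ℝ + α⁻¹ * ‖y - x‖ ^ 2 ≤
      proxObjective f α a s y - proxObjective f α a s x := by
  have hexpand (b : E) : ‖y - b‖ ^ 2 = ‖x - b‖ ^ 2 + 2 * ⟪x - b, y - x⟫_ℝ + ‖y - x‖ ^ 2 := by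
    rw [show y - b = (x - b) + (y - x) by abel, norm_add_sq_real]
  have hinner : ⟪(2 : ℝ) • x - (a + s), y - x⟫_ℝ = ⟪x - a, y - x⟫_ℝ + ⟪x - s, y - x⟫_ℝ := by
    rw [show (2 : ℝ) • x - (a + s) = (x - a) + (x - s) by module, inner_add_left]
  have hhalf : 1 / (2 * α) = α⁻¹ / 2 := by rw [one_div, mul_inv]; ring
  have := hf.inner_gradient_le_sub hg y
  simp only [proxObjective, inner_add_left, real_inner_smul_left, hinner, hexpand a, hexpand s,
    hhalf]
  linarith

theorem neg_mem_normalCone_iff_forall_proxObjective_lt {S : Set E} (hS : Convex ℝ S)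
    (hf : ConvexOn ℝ Set.univ f) (hg : HasGradientAt f g x) (hα : 0 < α) :
    -(α • g + ((2 : ℝ) • x - (a + s))) ∈ normalCone S x ↔
      x ∈ S ∧ ∀ y ∈ S, y ≠ x → proxObjective f α a s x < proxObjective f α a s y := by
  have hscale : α • g + ((2 : ℝ) • x - (a + s)) = α • (g + α⁻¹ • ((2 : ℝ) • x - (a + s))) := by
    rw [smul_add, smul_smul, mul_inv_cancel₀ hα.ne', one_smul]
  simp only [normalCone, Set.mem_ofPred_eq, hscale, inner_neg_left, real_inner_smul_left,
    neg_nonpos, mul_nonneg_iff_of_pos_left hα]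
  refine and_congr_right fun hx => ⟨fun hvi y hy hne => ?_, fun hmin y hy => ?_⟩
  · have hpos : 0 < α⁻¹ * ‖y - x‖ ^ 2 := by
      have := sub_ne_zero.mpr hne
      positivity
    linarith [hvi y hy, hf.proxObjective_sub_ge (α := α) (a := a) (s := s) hg y]
  · refine IsMinOn.inner_gradient_nonneg (isMinOn_iff.mpr fun z hz => ?_) hS hx hy
      (hg.proxObjective α a s)
    rcases eq_or_ne z x with rfl | hne
    · exact le_rfl
    · exact (hmin z hz hne).le

end

section
variable {N : ℕ} {d : Fin N → ℕ} (α : ℝ)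
  (G : ∀ i : Fin N, Prof N d → EuclideanSpace ℝ (Fin (d i)))
  (W : Matrix (Fin N) (Fin N) ℝ) (bx bx' : Est N d)

theorem Wact_sub :
    Wact W (bx - bx') = Wact W bx - Wact W bx' := by
  simp only [Wact, ← WithLp.toLp_sub]
  congr 1
  ext1 i
  simp [smul_sub]

theorem Wact_apply_apply (i j : Fin N) :
    Wact W bx i j = ∑ l, W i l • bx l j := by
  simp [Wact, WithLp.ofLp_sum]

theorem PhiOp_sub_add_Fa :
    PhiOp W (bx' - bx) + Fa α G W bx' =
      α • RT (extPseudoGrad G bx') + ((2 : ℝ) • bx' - (bx + Wact W bx)) := by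
  simp only [PhiOp, Fa, Wact_sub]
  module

theorem PhiOp_sub_add_Fa_apply_self (i : Fin N) :
    (PhiOp W (bx' - bx) + Fa α G W bx') i i =
      α • G i (bx' i) + ((2 : ℝ) • bx' i i - (bx i i + ∑ l, W i l • bx l i)) := by
  simp [PhiOp_sub_add_Fa, RT, extPseudoGrad, Wact_apply_apply]

theorem PhiOp_sub_add_Fa_apply_of_ne {i j : Fin N} (hji : j ≠ i) :
    (PhiOp W (bx' - bx) + Fa α G W bx') i j =
      (2 : ℝ) • bx' i j - (bx i j + ∑ l, W i l • bx l j) := by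
  simp [PhiOp_sub_add_Fa, RT, Function.update_of_ne hji, Wact_apply_apply]

end

theorem exists_mem_add_eq_zero_iff_neg_mem {A : Type*} [AddGroup A] (s : Set A) (u : A) :
    (∃ w ∈ s, u + w = 0) ↔ -u ∈ s :=
  ⟨fun ⟨_, hw, h⟩ => neg_eq_of_add_eq_zero_right h ▸ hw, fun h => ⟨-u, h, add_neg_cancel u⟩⟩

theorem two_smul_sub_eq_zero_iff {K V : Type*} [DivisionRing K] [CharZero K] [AddCommGroup V]
    [Module K V] (p q : V) : (2 : K) • p - q = 0 ↔ p = (1 / 2 : K) • q := by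
  rw [sub_eq_zero]
  constructor <;> rintro rfl <;> simp [smul_smul]

theorem stmt6_general {N : ℕ} {d : Fin N → ℕ}
    (Ω : ∀ i : Fin N, Set (EuclideanSpace ℝ (Fin (d i))))
    (hΩ : ∀ i, (Ω i).Nonempty ∧ IsClosed (Ω i) ∧ Convex ℝ (Ω i))
    (J : ∀ _ : Fin N, Prof N d → ℝ)
    (hJconv : ∀ i (x : Prof N d),
      ConvexOn ℝ Set.univ (fun y => J i (WithLp.toLp 2 (Function.update x i y))))
    (G : ∀ i : Fin N, Prof N d → EuclideanSpace ℝ (Fin (d i)))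
    (hGgrad : ∀ i (x : Prof N d),
      HasGradientAt (fun y => J i (WithLp.toLp 2 (Function.update x i y))) (G i x) (x i))
    (W : Matrix (Fin N) (Fin N) ℝ)
    (α : ℝ) (hα : 0 < α)
    (bx bx' : Est N d) :
    (∃ w ∈ normalCone (bigOmega Ω) bx',
        PhiOp W (bx' - bx) + Fa α G W bx' + w = 0) ↔
      (∀ i : Fin N,
        -- (a) consensus update of the estimates of the other agents' strategies
        (∀ j, j ≠ i → bx' i j = (1 / 2 : ℝ) • (bx i j + ∑ l, W i l • bx l j)) ∧
        -- (b) own strategy update: unique minimizer of the proximal best-response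
        (bx' i i ∈ Ω i ∧
          ∀ y ∈ Ω i, y ≠ bx' i i →
            J i (WithLp.toLp 2 (Function.update (bx' i) i (bx' i i))) +
              (1 / (2 * α)) * ‖bx' i i - bx i i‖ ^ 2 +
              (1 / (2 * α)) * ‖bx' i i - ∑ j, W i j • bx j i‖ ^ 2 <
            J i (WithLp.toLp 2 (Function.update (bx' i) i y)) +
              (1 / (2 * α)) * ‖y - bx i i‖ ^ 2 +
              (1 / (2 * α)) * ‖y - ∑ j, W i j • bx j i‖ ^ 2)) := by
  rw [exists_mem_add_eq_zero_iff_neg_mem]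
  change _ ∈ normalCone {z : Est N d | ∀ i, z i ∈ {p : Prof N d | p i ∈ Ω i}} bx' ↔ _
  rw [mem_normalCone_piLp_iff]
  refine forall_congr' fun i => ?_
  rw [mem_normalCone_setOf_apply_mem_iff]
  refine and_congr (forall_congr' fun j => imp_congr_right fun hji => ?_) ?_
  · rw [PiLp.neg_apply, PiLp.neg_apply, neg_eq_zero,
      PhiOp_sub_add_Fa_apply_of_ne α G W bx bx' hji, two_smul_sub_eq_zero_iff]
  · rw [PiLp.neg_apply, PiLp.neg_apply, PhiOp_sub_add_Fa_apply_self]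
    exact neg_mem_normalCone_iff_forall_proxObjective_lt (hΩ i).2.2 (hJconv i (bx' i))
      (hGgrad i (bx' i)) hα

/-- Lemma 2 of the paper. For `Φ := I_{Nn} + 𝐖`, the inclusion
`0 ∈ Φ(𝐱^{k+1} − 𝐱^k) + F_a(𝐱^{k+1}) + N_𝛀(𝐱^{k+1})` holds iff, for every agent `i`:
(a) `𝐱^{k+1}_{i,−i} = ½(𝐱^k_{i,−i} + Σ_j w_{ij}𝐱^k_{j,−i})`, and (b) `𝐱^{k+1}_{i,i}` is the
unique minimizer over `Ω_i` of
`y ↦ J_i(y, 𝐱^{k+1}_{i,−i}) + (1/2α)‖y − 𝐱^k_{i,i}‖² + (1/2α)‖y − Σ_j w_{ij}𝐱^k_{j,i}‖²`;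
i.e. Algorithm 1 is exactly the preconditioned proximal-point iteration
`𝐱^{k+1} ∈ J_{Φ⁻¹A}(𝐱^k)`. -/
theorem stmt6 {N : ℕ} {d : Fin N → ℕ}
    (Ω : ∀ i : Fin N, Set (EuclideanSpace ℝ (Fin (d i))))
    (hΩ : ∀ i, (Ω i).Nonempty ∧ IsClosed (Ω i) ∧ Convex ℝ (Ω i))
    (J : ∀ _ : Fin N, Prof N d → ℝ)
    (hJcont : ∀ i, Continuous (J i))
    (hJconv : ∀ i (x : Prof N d),
      ConvexOn ℝ Set.univ (fun y => J i (WithLp.toLp 2 (Function.update x i y))))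
    (G : ∀ i : Fin N, Prof N d → EuclideanSpace ℝ (Fin (d i)))
    (hGgrad : ∀ i (x : Prof N d),
      HasGradientAt (fun y => J i (WithLp.toLp 2 (Function.update x i y))) (G i x) (x i))
    (μ θ0 : ℝ) (hμ : 0 < μ) (hθ0 : 0 < θ0)
    (hFmon : ∀ x y : Prof N d,
      ⟪x - y, pseudoGrad G x - pseudoGrad G y⟫_ℝ ≥ μ * ‖x - y‖ ^ 2)
    (hFlip : ∀ x y : Prof N d, ‖pseudoGrad G x - pseudoGrad G y‖ ≤ θ0 * ‖x - y‖)
    (W : Matrix (Fin N) (Fin N) ℝ)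
    (hWsymm : W.IsSymm) (hWnonneg : ∀ i j, 0 ≤ W i j)
    (hWstoch : ∀ i, ∑ j, W i j = 1) (hWdiag : ∀ i, 0 < W i i)
    (α : ℝ) (hα : 0 < α)
    (bx bx' : Est N d) :
    (∃ w ∈ normalCone (bigOmega Ω) bx',
        PhiOp W (bx' - bx) + Fa α G W bx' + w = 0) ↔
      (∀ i : Fin N,
        -- (a) consensus update of the estimates of the other agents' strategies
        (∀ j, j ≠ i → bx' i j = (1 / 2 : ℝ) • (bx i j + ∑ l, W i l • bx l j)) ∧
        -- (b) own strategy update: unique minimizer of the proximal best-response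
        (bx' i i ∈ Ω i ∧
          ∀ y ∈ Ω i, y ≠ bx' i i →
            J i (WithLp.toLp 2 (Function.update (bx' i) i (bx' i i))) +
              (1 / (2 * α)) * ‖bx' i i - bx i i‖ ^ 2 +
              (1 / (2 * α)) * ‖bx' i i - ∑ j, W i j • bx j i‖ ^ 2 <
            J i (WithLp.toLp 2 (Function.update (bx' i) i y)) +
              (1 / (2 * α)) * ‖y - bx i i‖ ^ 2 +
              (1 / (2 * α)) * ‖y - ∑ j, W i j • bx j i‖ ^ 2)) :=
  stmt6_general Ω hΩ J hJconv G hGgrad W α hα bx bx'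
end

section
/- Let θ ∈ [μ, θ0] be a Lipschitz constant of the extended pseudo-gradient 𝐅, let λ2 > 0 satisfy ⟨v, (I_{Nn} − 𝐖)v⟩ ≥ λ2‖v‖² for all v ∈ ℝ^{Nn} orthogonal to the consensus subspace E_n, and define α_max := 4μλ2 / ((θ0+θ)² + 4μθ) and M := α·[[μ/N, −(θ0+θ)/(2√N)], [−(θ0+θ)/(2√N), λ2/α − θ]]. Then for any α ∈ (0, α_max): the matrix M is positive definite, and for every ρ_α > 0 such that ⟨Mv, v⟩ ≥ ρ_α‖v‖² for all v ∈ ℝ² (in particular ρ_α = λ_min(M)), the mapping F_a is ρ_α-restricted strongly monotone with respect to E_n: ⟨𝐱 − 𝐲, F_a(𝐱) − F_a(𝐲)⟩ ≥ ρ_α‖𝐱 − 𝐲‖² for all 𝐱 ∈ ℝ^{Nn} and all 𝐲 ∈ E_n. -/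
open scoped InnerProductSpace Matrix

/-!
For `𝐲 = 𝟏 ⊗ y`, write `𝐱 − 𝐲 = 𝟏 ⊗ z + w` with `z` the mean of the blocks of `𝐱 − 𝐲`, so
that `w ⊥ E_n` and `‖𝐱 − 𝐲‖² = N‖z‖² + ‖w‖²`. Since `𝐖` is symmetric and fixes `E_n`, the consensus part drops out of
`⟨𝐱 − 𝐲, (I − 𝐖)(𝐱 − 𝐲)⟩`, which the spectral gap bounds below by `λ₂‖w‖²`. In the pseudo-gradient
term, splitting `𝐅(𝐱) − 𝐅(𝐲)` at the consensus point `𝟏 ⊗ (y + z)` and using strong monotonicity of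
`F` in the direction `z` and the Lipschitz bounds of `F` and `𝐅` on the cross terms gives
`μ‖z‖² − (θ0 + θ)‖z‖‖w‖ − θ‖w‖²`. The sum is the quadratic form of `M` at `(√N‖z‖, ‖w‖)`, whose
positive definiteness for `α < α_max` is the determinant condition `α((θ0+θ)² + 4μθ) < 4μλ₂`.
-/

namespace Matrix

theorem posDef_fin_two {a b c : ℝ} (ha : 0 < a) (hdet : b ^ 2 < a * c) :
    !![a, b; b, c].PosDef := by
  refine posDef_iff_dotProduct_mulVec.2 ⟨?_, fun x hx => ?_⟩
  · ext i j
    fin_cases i <;> fin_cases j <;> rfl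
  · have hq : star x ⬝ᵥ (!![a, b; b, c] *ᵥ x) =
        a * x 0 ^ 2 + 2 * b * x 0 * x 1 + c * x 1 ^ 2 := by
      simp [mulVec, dotProduct, Fin.sum_univ_two]
      ring
    rw [hq]
    by_cases h1 : x 1 = 0
    · have h0 : x 0 ≠ 0 := fun h0 => hx (funext fun i => by fin_cases i <;> simp [h0, h1])
      simpa [h1] using mul_pos ha (sq_pos_of_ne_zero h0)
    · have hsq : a * (a * x 0 ^ 2 + 2 * b * x 0 * x 1 + c * x 1 ^ 2) =
          (a * x 0 + b * x 1) ^ 2 + (a * c - b ^ 2) * x 1 ^ 2 := by ring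
      refine pos_of_mul_pos_right ?_ ha.le
      rw [hsq]
      exact add_pos_of_nonneg_of_pos (sq_nonneg _) (mul_pos (sub_pos.2 hdet) (sq_pos_of_ne_zero h1))

theorem smul_fin_two_mulVec_dotProduct (α a b c x y : ℝ) :
    (α • !![a, b; b, c]) *ᵥ ![x, y] ⬝ᵥ ![x, y] = α * (a * x ^ 2 + 2 * b * x * y + c * y ^ 2) := by
  simp [mulVec, dotProduct, Fin.sum_univ_two]
  ring

end Matrix

section Consensus

variable {ι E : Type*}

def constLp (y : E) : PiLp 2 (fun _ : ι => E) := WithLp.toLp 2 fun _ => y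

@[simp]
theorem constLp_apply (y : E) (i : ι) : (constLp y : PiLp 2 (fun _ : ι => E)) i = y := rfl

variable [NormedAddCommGroup E]

theorem constLp_add (y z : E) :
    (constLp (y + z) : PiLp 2 (fun _ : ι => E)) = constLp y + constLp z := rfl

variable [Fintype ι] [InnerProductSpace ℝ E]

theorem inner_constLp_right (v : PiLp 2 (fun _ : ι => E)) (y : E) :
    ⟪v, constLp y⟫_ℝ = ⟪∑ i, v i, y⟫_ℝ := by
  simp [PiLp.inner_apply, sum_inner]

theorem norm_constLp_sq (y : E) :
    ‖(constLp y : PiLp 2 (fun _ : ι => E))‖ ^ 2 = Fintype.card ι * ‖y‖ ^ 2 := by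
  rw [← real_inner_self_eq_norm_sq, inner_constLp_right]
  simp [← Nat.cast_smul_eq_nsmul ℝ, real_inner_smul_left]

noncomputable def blockMean (v : PiLp 2 (fun _ : ι => E)) : E :=
  (Fintype.card ι : ℝ)⁻¹ • ∑ i, v i

theorem inner_sub_constLp_blockMean [Nonempty ι] (v : PiLp 2 (fun _ : ι => E)) (y : E) :
    ⟪v - constLp (blockMean v), constLp y⟫_ℝ = 0 := by
  rw [inner_sub_left, inner_constLp_right, inner_constLp_right, sub_eq_zero]
  simp [blockMean, ← Nat.cast_smul_eq_nsmul ℝ, smul_smul]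

theorem norm_sq_eq_card_mul_norm_blockMean_sq_add [Nonempty ι] (v : PiLp 2 (fun _ : ι => E)) :
    ‖v‖ ^ 2 = Fintype.card ι * ‖blockMean v‖ ^ 2 + ‖v - constLp (blockMean v)‖ ^ 2 := by
  have h := norm_add_sq_real (constLp (blockMean v)) (v - constLp (blockMean v))
  rwa [add_sub_cancel, real_inner_comm, inner_sub_constLp_blockMean, norm_constLp_sq, mul_zero,
    add_zero] at h

end Consensus

section Estimates

variable {N : ℕ} {d : Fin N → ℕ}

theorem mem_consensus_iff {u : Est N d} : u ∈ consensus N d ↔ ∃ y, u = constLp y :=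
  ⟨fun ⟨y, hy⟩ => ⟨y, PiLp.ext hy⟩, fun ⟨y, hy⟩ => ⟨y, fun _ => by rw [hy, constLp_apply]⟩⟩

theorem Wact_sub_s8 (W : Matrix (Fin N) (Fin N) ℝ) (u v : Est N d) :
    Wact W (u - v) = Wact W u - Wact W v :=
  PiLp.ext fun i => by simp [Wact, smul_sub]

theorem Wact_constLp {W : Matrix (Fin N) (Fin N) ℝ} (hW : ∀ i, ∑ j, W i j = 1) (y : Prof N d) :
    Wact W (constLp y) = constLp y :=
  PiLp.ext fun i => by simp [Wact, ← Finset.sum_smul, hW i]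

theorem inner_Wact_comm {W : Matrix (Fin N) (Fin N) ℝ} (hW : W.IsSymm) (u v : Est N d) :
    ⟪u, Wact W v⟫_ℝ = ⟪Wact W u, v⟫_ℝ := by
  rw [PiLp.inner_apply, PiLp.inner_apply]
  simp only [Wact, PiLp.toLp_apply, inner_sum, sum_inner, real_inner_smul_right,
    real_inner_smul_left]
  rw [Finset.sum_comm]
  exact Finset.sum_congr rfl fun i _ => Finset.sum_congr rfl fun j _ => by rw [hW.apply j i]

theorem inner_sub_Wact_sub_constLp {W : Matrix (Fin N) (Fin N) ℝ} (hWsymm : W.IsSymm)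
    (hWstoch : ∀ i, ∑ j, W i j = 1) (v : Est N d) (y : Prof N d) :
    ⟪v - constLp y, (v - constLp y) - Wact W (v - constLp y)⟫_ℝ = ⟪v, v - Wact W v⟫_ℝ := by
  have hlap : (v - constLp y) - Wact W (v - constLp y) = v - Wact W v := by
    rw [Wact_sub_s8, Wact_constLp hWstoch]
    abel
  rw [hlap, inner_sub_left, sub_eq_self, inner_sub_right, inner_Wact_comm hWsymm,
    Wact_constLp hWstoch, sub_self]

def diagBlocks (v : Est N d) : Prof N d := WithLp.toLp 2 fun i => v i i

theorem norm_diagBlocks_le (v : Est N d) : ‖diagBlocks v‖ ≤ ‖v‖ := by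
  refine (sq_le_sq₀ (norm_nonneg _) (norm_nonneg _)).1 ?_
  rw [PiLp.norm_sq_eq_of_L2, PiLp.norm_sq_eq_of_L2]
  gcongr with i
  exact PiLp.norm_apply_le (v i) i

theorem inner_RT (v : Est N d) (w : Prof N d) : ⟪v, RT w⟫_ℝ = ⟪diagBlocks v, w⟫_ℝ := by
  rw [PiLp.inner_apply, PiLp.inner_apply]
  refine Finset.sum_congr rfl fun i _ =>
    (Finset.sum_eq_single i (fun j _ hj => ?_) (by simp)).trans ?_
  · simp [RT, Function.update_of_ne hj]
  · simp [RT, diagBlocks]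

theorem RT_sub (u v : Prof N d) : RT (u - v) = RT u - RT v := by
  refine PiLp.ext fun i => PiLp.ext fun j => ?_
  rcases eq_or_ne j i with rfl | hj
  · simp [RT]
  · simp [RT, Function.update_of_ne hj]

theorem inner_sub_Fa_sub (α : ℝ) (G : ∀ i : Fin N, Prof N d → EuclideanSpace ℝ (Fin (d i)))
    (W : Matrix (Fin N) (Fin N) ℝ) (x y : Est N d) :
    ⟪x - y, Fa α G W x - Fa α G W y⟫_ℝ =
      α * ⟪diagBlocks (x - y), extPseudoGrad G x - extPseudoGrad G y⟫_ℝ +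
        ⟪x - y, (x - y) - Wact W (x - y)⟫_ℝ := by
  have hFa : Fa α G W x - Fa α G W y =
      α • RT (extPseudoGrad G x - extPseudoGrad G y) + ((x - y) - Wact W (x - y)) := by
    rw [RT_sub, Wact_sub_s8, Fa, Fa, smul_sub]
    abel
  rw [hFa, inner_add_right, real_inner_smul_right, inner_RT]

theorem inner_diagBlocks_extPseudoGrad_sub_ge
    {G : ∀ i : Fin N, Prof N d → EuclideanSpace ℝ (Fin (d i))} {μ θ0 θ : ℝ}
    (hFmon : ∀ x y : Prof N d,
      ⟪x - y, pseudoGrad G x - pseudoGrad G y⟫_ℝ ≥ μ * ‖x - y‖ ^ 2)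
    (hFlip : ∀ x y : Prof N d, ‖pseudoGrad G x - pseudoGrad G y‖ ≤ θ0 * ‖x - y‖)
    (hextLip : ∀ bx by_ : Est N d,
      ‖extPseudoGrad G bx - extPseudoGrad G by_‖ ≤ θ * ‖bx - by_‖)
    (x : Est N d) (y z : Prof N d) :
    μ * ‖z‖ ^ 2 - (θ0 + θ) * ‖z‖ * ‖x - constLp (y + z)‖ - θ * ‖x - constLp (y + z)‖ ^ 2 ≤
      ⟪diagBlocks (x - constLp y), extPseudoGrad G x - extPseudoGrad G (constLp y)⟫_ℝ := by
  set w := x - constLp (y + z)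
  set e := extPseudoGrad G x - extPseudoGrad G (constLp (y + z))
  set f := pseudoGrad G (y + z) - pseudoGrad G y
  have hdiag : diagBlocks (x - constLp y) = z + diagBlocks w :=
    PiLp.ext fun i => by
      simp only [w, diagBlocks, PiLp.add_apply, PiLp.sub_apply, constLp_apply]
      abel
  have hsplit : extPseudoGrad G x - extPseudoGrad G (constLp y) = e + f := by
    simp only [e, f, extPseudoGrad, pseudoGrad, constLp_apply]
    abel
  have he : ‖e‖ ≤ θ * ‖w‖ := hextLip _ _
  have hf : ‖f‖ ≤ θ0 * ‖z‖ := by simpa using hFlip (y + z) y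
  have hzf : μ * ‖z‖ ^ 2 ≤ ⟪z, f⟫_ℝ := by simpa using hFmon (y + z) y
  have hw := norm_diagBlocks_le w
  have cs (a b : Prof N d) : -(‖a‖ * ‖b‖) ≤ ⟪a, b⟫_ℝ :=
    neg_le_of_abs_le (abs_real_inner_le_norm a b)
  rw [hdiag, hsplit, inner_add_left, inner_add_right, inner_add_right]
  nlinarith [cs z e, cs (diagBlocks w) e, cs (diagBlocks w) f,
    mul_le_mul_of_nonneg_left he (norm_nonneg z), mul_le_mul hw he (norm_nonneg _) (norm_nonneg _),
    mul_le_mul hw hf (norm_nonneg _) (norm_nonneg _)]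

end Estimates

section RestrictedMonotonicityMatrix

variable {N : ℕ} {μ θ0 θ lam2 α : ℝ}

noncomputable def restrictedMonotonicityMatrix (N : ℕ) (μ θ0 θ lam2 α : ℝ) :
    Matrix (Fin 2) (Fin 2) ℝ :=
  α • !![μ / (N : ℝ), -(θ0 + θ) / (2 * Real.sqrt (N : ℝ));
    -(θ0 + θ) / (2 * Real.sqrt (N : ℝ)), lam2 / α - θ]

theorem posDef_restrictedMonotonicityMatrix (hN : 0 < N) (hμ : 0 < μ) (hθ : 0 < θ) (hα : 0 < α)
    (hαmax : α < 4 * μ * lam2 / ((θ0 + θ) ^ 2 + 4 * μ * θ)) :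
    (restrictedMonotonicityMatrix N μ θ0 θ lam2 α).PosDef := by
  have hN' : (0 : ℝ) < N := by exact_mod_cast hN
  have hdet : α * (θ0 + θ) ^ 2 < 4 * μ * (lam2 - α * θ) := by
    have := (lt_div_iff₀ (by positivity : (0 : ℝ) < (θ0 + θ) ^ 2 + 4 * μ * θ)).1 hαmax
    linarith
  refine Matrix.PosDef.smul (Matrix.posDef_fin_two (by positivity) ?_) hα
  rw [div_pow, mul_pow, Real.sq_sqrt hN'.le, neg_sq]
  field_simp
  nlinarith

theorem restrictedMonotonicityMatrix_mulVec_dotProduct (hN : 0 < N) (hα : α ≠ 0) (a b : ℝ) :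
    restrictedMonotonicityMatrix N μ θ0 θ lam2 α *ᵥ ![Real.sqrt N * a, b] ⬝ᵥ
        ![Real.sqrt N * a, b] =
      α * μ * a ^ 2 - α * (θ0 + θ) * a * b + (lam2 - α * θ) * b ^ 2 := by
  rw [restrictedMonotonicityMatrix, Matrix.smul_fin_two_mulVec_dotProduct]
  field_simp
  rw [Real.sq_sqrt N.cast_nonneg]
  ring

end RestrictedMonotonicityMatrix

theorem stmt8_general {N : ℕ} {d : Fin N → ℕ} (hN : 0 < N)
    (G : ∀ i : Fin N, Prof N d → EuclideanSpace ℝ (Fin (d i)))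
    (μ θ0 : ℝ) (hμ : 0 < μ)
    (hFmon : ∀ x y : Prof N d,
      ⟪x - y, pseudoGrad G x - pseudoGrad G y⟫_ℝ ≥ μ * ‖x - y‖ ^ 2)
    (hFlip : ∀ x y : Prof N d, ‖pseudoGrad G x - pseudoGrad G y‖ ≤ θ0 * ‖x - y‖)
    (W : Matrix (Fin N) (Fin N) ℝ)
    (hWsymm : W.IsSymm)
    (hWstoch : ∀ i, ∑ j, W i j = 1)
    -- θ is a Lipschitz constant of the extended pseudo-gradient 𝐅, with θ ∈ [μ, θ0]
    (θ : ℝ) (hθl : μ ≤ θ)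
    (hextLip : ∀ bx by_ : Est N d,
      ‖extPseudoGrad G bx - extPseudoGrad G by_‖ ≤ θ * ‖bx - by_‖)
    -- lam2 is a spectral-gap constant of I − 𝐖 orthogonally to the consensus subspace
    (lam2 : ℝ)
    (hgap : ∀ v : Est N d, (∀ u ∈ consensus N d, ⟪v, u⟫_ℝ = 0) →
      ⟪v, v - Wact W v⟫_ℝ ≥ lam2 * ‖v‖ ^ 2)
    (α : ℝ) (hα0 : 0 < α)
    (hαmax : α < 4 * μ * lam2 / ((θ0 + θ) ^ 2 + 4 * μ * θ)) :
    -- conclusion: M ≻ 0, and F_a is ρ_α-restricted strongly monotone w.r.t. E_n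
    (α • !![μ / (N : ℝ), -(θ0 + θ) / (2 * Real.sqrt (N : ℝ));
        -(θ0 + θ) / (2 * Real.sqrt (N : ℝ)), lam2 / α - θ]).PosDef ∧
    ∀ ρα : ℝ, 0 < ρα →
      (∀ v : Fin 2 → ℝ,
        (α • !![μ / (N : ℝ), -(θ0 + θ) / (2 * Real.sqrt (N : ℝ));
          -(θ0 + θ) / (2 * Real.sqrt (N : ℝ)), lam2 / α - θ]).mulVec v ⬝ᵥ v ≥
          ρα * (v ⬝ᵥ v)) →
      ∀ bx : Est N d, ∀ by_ ∈ consensus N d,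
        ⟪bx - by_, Fa α G W bx - Fa α G W by_⟫_ℝ ≥ ρα * ‖bx - by_‖ ^ 2 := by
  have hθ : 0 < θ := hμ.trans_le hθl
  refine ⟨posDef_restrictedMonotonicityMatrix hN hμ hθ hα0 hαmax, fun ρα _ hM x y hy => ?_⟩
  obtain ⟨y₀, rfl⟩ := mem_consensus_iff.1 hy
  have : Nonempty (Fin N) := ⟨⟨0, hN⟩⟩
  set z := blockMean (x - constLp y₀)
  set w := x - constLp y₀ - constLp z
  have hperp : ∀ u ∈ consensus N d, ⟪w, u⟫_ℝ = 0 := fun u hu => by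
    obtain ⟨y, rfl⟩ := mem_consensus_iff.1 hu
    exact inner_sub_constLp_blockMean _ y
  have hlap := hgap w hperp
  rw [inner_sub_Wact_sub_constLp hWsymm hWstoch] at hlap
  have hgrad := inner_diagBlocks_extPseudoGrad_sub_ge hFmon hFlip hextLip x y₀ z
  rw [constLp_add, ← sub_sub] at hgrad
  have hquad : restrictedMonotonicityMatrix N μ θ0 θ lam2 α *ᵥ ![√N * ‖z‖, ‖w‖] ⬝ᵥ
      ![√N * ‖z‖, ‖w‖] ≥ ρα * (![√N * ‖z‖, ‖w‖] ⬝ᵥ ![√N * ‖z‖, ‖w‖]) := hM _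
  rw [restrictedMonotonicityMatrix_mulVec_dotProduct hN hα0.ne', Matrix.vec2_dotProduct',
    mul_mul_mul_comm, Real.mul_self_sqrt N.cast_nonneg] at hquad
  rw [inner_sub_Fa_sub, norm_sq_eq_card_mul_norm_blockMean_sq_add (x - constLp y₀),
    Fintype.card_fin]
  nlinarith [mul_le_mul_of_nonneg_left hgrad hα0.le]

/-- Lemma 4 of the paper, \cite[Lem. 3]{Pavel2018}. Let `θ ∈ [μ, θ0]` be a
Lipschitz constant of `𝐅`, let `lam2 > 0` be a spectral-gap constant of `I − 𝐖` on the
orthogonal complement of the consensus subspace, and let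
`α_max := 4μlam2/((θ0+θ)² + 4μθ)`. Then for any `α ∈ (0, α_max)` the matrix
`M = α[[μ/N, −(θ0+θ)/(2√N)], [−(θ0+θ)/(2√N), lam2/α − θ]]` is positive definite and, for
every `ρ_α > 0` with `M ⪰ ρ_α I`, the mapping `F_a` is `ρ_α`-restricted strongly monotone
with respect to the consensus subspace `E_n`. -/
theorem stmt8 {N : ℕ} {d : Fin N → ℕ} (hN : 0 < N)
    (J : ∀ _ : Fin N, Prof N d → ℝ)
    (hJconv : ∀ i (x : Prof N d),
      ConvexOn ℝ Set.univ (fun y => J i (WithLp.toLp 2 (Function.update x i y))))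
    (G : ∀ i : Fin N, Prof N d → EuclideanSpace ℝ (Fin (d i)))
    (hGgrad : ∀ i (x : Prof N d),
      HasGradientAt (fun y => J i (WithLp.toLp 2 (Function.update x i y))) (G i x) (x i))
    (μ θ0 : ℝ) (hμ : 0 < μ) (hθ0 : 0 < θ0)
    (hFmon : ∀ x y : Prof N d,
      ⟪x - y, pseudoGrad G x - pseudoGrad G y⟫_ℝ ≥ μ * ‖x - y‖ ^ 2)
    (hFlip : ∀ x y : Prof N d, ‖pseudoGrad G x - pseudoGrad G y‖ ≤ θ0 * ‖x - y‖)
    (W : Matrix (Fin N) (Fin N) ℝ)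
    (hWsymm : W.IsSymm) (hWnonneg : ∀ i j, 0 ≤ W i j)
    (hWstoch : ∀ i, ∑ j, W i j = 1) (hWdiag : ∀ i, 0 < W i i)
    -- θ is a Lipschitz constant of the extended pseudo-gradient 𝐅, with θ ∈ [μ, θ0]
    (θ : ℝ) (hθl : μ ≤ θ) (hθu : θ ≤ θ0)
    (hextLip : ∀ bx by_ : Est N d,
      ‖extPseudoGrad G bx - extPseudoGrad G by_‖ ≤ θ * ‖bx - by_‖)
    -- lam2 is a spectral-gap constant of I − 𝐖 orthogonally to the consensus subspace
    (lam2 : ℝ) (hlam2 : 0 < lam2)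
    (hgap : ∀ v : Est N d, (∀ u ∈ consensus N d, ⟪v, u⟫_ℝ = 0) →
      ⟪v, v - Wact W v⟫_ℝ ≥ lam2 * ‖v‖ ^ 2)
    (α : ℝ) (hα0 : 0 < α)
    (hαmax : α < 4 * μ * lam2 / ((θ0 + θ) ^ 2 + 4 * μ * θ)) :
    -- conclusion: M ≻ 0, and F_a is ρ_α-restricted strongly monotone w.r.t. E_n
    (α • !![μ / (N : ℝ), -(θ0 + θ) / (2 * Real.sqrt (N : ℝ));
        -(θ0 + θ) / (2 * Real.sqrt (N : ℝ)), lam2 / α - θ]).PosDef ∧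
    ∀ ρα : ℝ, 0 < ρα →
      (∀ v : Fin 2 → ℝ,
        (α • !![μ / (N : ℝ), -(θ0 + θ) / (2 * Real.sqrt (N : ℝ));
          -(θ0 + θ) / (2 * Real.sqrt (N : ℝ)), lam2 / α - θ]).mulVec v ⬝ᵥ v ≥
          ρα * (v ⬝ᵥ v)) →
      ∀ bx : Est N d, ∀ by_ ∈ consensus N d,
        ⟪bx - by_, Fa α G W bx - Fa α G W by_⟫_ℝ ≥ ρα * ‖bx - by_‖ ^ 2 :=
  stmt8_general hN G μ θ0 hμ hFmon hFlip W hWsymm hWstoch θ hθl hextLip lam2 hgap α hα0 hαmax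
end
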